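/- arXiv:2605.22972 — 2 statements merged into one kernel-verified Lean document; each statement's English description precedes it below -/
import Mathlib

section
/- Under the TI-with-exceptions kernel ridge regression setup, the reduced dual coefficients satisfy the reduced (n−1)-dimensional linear system: δ_s·(B b̄)_i = 1 − δ_o·h̄·((e_p)_i + (e_{q−1})_i − (e_q)_i − (e_{p−1})_i) for all i = 1,…,n−1, and δ_s·(1 + c̃⁻¹)·h̄ + δ_o·(b̄_{q−1} + b̄_p − b̄_q − b̄_{p−1}) = 1, where B is the (n−1)×(n−1) tridiagonal matrix with diagonal entries 1 + c̃⁻¹ and off-diagonal entries −(1−α)/2, e_i denotes the i-th standard basis vector of ℝ^{n−1} (interpreted as the zero vector when the index is 0 or n), and b̄_0 = b̄_n = 0. -/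
open Real Matrix Finset

noncomputable section

namespace TIExc

/-- Real inverse hyperbolic cosine. -/
def arcosh (x : ℝ) : ℝ := Real.log (x + Real.sqrt (x ^ 2 - 1))

/-- Training index set: adjacent pairs in both orders plus the exception pair in both orders. -/
def T (n p q : ℕ) : Finset (ℕ × ℕ) :=
  ((Finset.Icc 1 (n - 1)).image fun j => (j, j + 1)) ∪
    ((Finset.Icc 1 (n - 1)).image fun j => (j + 1, j)) ∪ {(p, q), (q, p)}

/-- Exchangeable kernel on ordered pairs of items. -/
def ker (κs κo κd : ℝ) (u u' : ℕ × ℕ) : ℝ :=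
  if u = u' then κs else if u.1 = u'.1 ∨ u.2 = u'.2 then κo else κd

/-- Training labels. -/
def lab (p q : ℕ) (u : ℕ × ℕ) : ℝ :=
  if u = (p, q) then 1 else if u = (q, p) then -1 else if u.1 < u.2 then 1 else -1

/-- The training-set kernel matrix. -/
def Kmat (n p q : ℕ) (κs κo κd : ℝ) : Matrix ↥(T n p q) ↥(T n p q) ℝ :=
  fun u u' => ker κs κo κd u.1 u'.1

/-- Dual coefficients `a = (K + c⁻¹ I)⁻¹ y`. -/
def dual (n p q : ℕ) (κs κo κd c : ℝ) : ↥(T n p q) → ℝ :=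
  (Kmat n p q κs κo κd + c⁻¹ • (1 : Matrix ↥(T n p q) ↥(T n p q) ℝ))⁻¹ *ᵥ
    fun u => lab p q u.1

/-- Dual coefficient at an ordered pair (`0` off the training set). -/
def aAt (n p q : ℕ) (κs κo κd c : ℝ) (u : ℕ × ℕ) : ℝ :=
  if h : u ∈ T n p q then dual n p q κs κo κd c ⟨u, h⟩ else 0

/-- `b̄ⱼ = a₍ⱼ,ⱼ₊₁₎`, with the convention `b̄₀ = b̄ₙ = 0`. -/
def bbar (n p q : ℕ) (κs κo κd c : ℝ) (j : ℕ) : ℝ :=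
  aAt n p q κs κo κd c (j, j + 1)

/-- `h̄ = a₍ₚ,q₎`. -/
def hbar (n p q : ℕ) (κs κo κd c : ℝ) : ℝ :=
  aAt n p q κs κo κd c (p, q)

/-- Model prediction `f(u) = ∑_{u' ∈ T} κ(u,u') a_{u'}`. -/
def pred (n p q : ℕ) (κs κo κd c : ℝ) (u : ℕ × ℕ) : ℝ :=
  ∑ u' : ↥(T n p q), ker κs κo κd u u'.1 * dual n p q κs κo κd c u'

/-- Emergent rank `rⱼ = δₒ(b̄ⱼ − b̄ⱼ₋₁) + δₒ h̄ ([j = p] − [j = q])`. -/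
def rank (n p q : ℕ) (κs κo κd c : ℝ) (j : ℕ) : ℝ :=
  (κo - κd) * (bbar n p q κs κo κd c j - bbar n p q κs κo κd c (j - 1)) +
    (κo - κd) * hbar n p q κs κo κd c *
      ((if j = p then 1 else 0) - (if j = q then 1 else 0))

/-- `λ = arccosh((1 + c̃⁻¹)/(1 − α))`. -/
def lam (α ctil : ℝ) : ℝ := arcosh ((1 + ctil⁻¹) / (1 - α))

/-- The no-exception TI rank `r_j^TI`. -/
def rTI (n : ℕ) (l : ℝ) (j : ℕ) : ℝ :=
  Real.sinh ((((n : ℝ) + 1) / 2 - (j : ℝ)) * l) /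
    (Real.sinh (((n : ℝ) + 1) / 2 * l) - Real.sinh (((n : ℝ) - 1) / 2 * l))

/-- `D̃ᵢⱼ = cosh((min(i,j) − 1/2)λ)·cosh((n − max(i,j) + 1/2)λ)`. -/
def Dtil (n : ℕ) (l : ℝ) (i j : ℕ) : ℝ :=
  Real.cosh (((min i j : ℕ) - (1 : ℝ) / 2) * l) *
    Real.cosh (((n : ℝ) - (max i j : ℕ) + 1 / 2) * l)

/-- The quantity `G`. -/
def Gq (n p q : ℕ) (l : ℝ) : ℝ :=
  Real.cosh (((q : ℝ) - 1 / 2) * l) *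
      Real.sinh (((n : ℝ) - ((p : ℝ) + (q : ℝ) - 1) / 2) * l) +
    Real.cosh (((n : ℝ) - (p : ℝ) + 1 / 2) * l) *
      Real.sinh ((((p : ℝ) + (q : ℝ) - 1) / 2) * l)


/-- The reduced `(n−1)×(n−1)` tridiagonal matrix `B` with diagonal `1 + c̃⁻¹`
and off-diagonal `−(1−α)/2`. -/
def Bmat (n : ℕ) (α ctil : ℝ) : Matrix (Fin (n - 1)) (Fin (n - 1)) ℝ :=
  fun i j =>
    if i = j then 1 + ctil⁻¹
    else if (i : ℕ) + 1 = (j : ℕ) ∨ (j : ℕ) + 1 = (i : ℕ) then -((1 - α) / 2)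
    else 0

/-- The `m`-th standard basis vector of `ℝ^(n−1)` (1-based indexing), interpreted
as the zero vector when `m = 0` or `m = n`. -/
def stdBasis (n m : ℕ) : Fin (n - 1) → ℝ := fun i => if (i : ℕ) + 1 = m then 1 else 0

/-!
The kernel splits as `κ(u, u') = κd + δₒ [j = j'] + δₒ [k = k'] + (δₛ − 2δₒ) [u = u']`, a sum of
positive semidefinite matrices, so `K + c⁻¹ I` is positive definite and `a` solves the normal
equations `K a + c⁻¹ a = y`. Swapping both coordinates of every pair preserves `K` and negates `y`,
so `a` is antisymmetric: `Σ a = 0`, and the sum of `a` over the pairs with second coordinate `k`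
is minus the net outflow at `k`. The normal equation at `u = (j, k)` thus becomes
`r_j − r_k + (δₛ − 2δₒ + c⁻¹) a_u = y_u` in terms of the emergent ranks `r`; at `u = (j, j + 1)` and
`u = (p, q)` this is the reduced system.
-/

lemma posSemidef_of_ite_eq {ι β : Type*} [Fintype ι] [DecidableEq β] (f : ι → β) :
    (Matrix.of fun i j => if f i = f j then (1 : ℝ) else 0).PosSemidef := by
  let G : Matrix ι (Set.range f) ℝ := Matrix.of fun i b => if f i = b then 1 else 0
  convert posSemidef_self_mul_conjTranspose G
  ext i j
  rw [Matrix.mul_apply, Finset.sum_eq_single ⟨f i, Set.mem_range_self i⟩]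
  · by_cases h : f i = f j <;> simp [G, h, eq_comm]
  · rintro b - hb
    have : f i ≠ b := fun h => hb (Subtype.ext h.symm)
    simp [G, this]
  · simp

lemma inv_mulVec_comp_equiv {ι R : Type*} [Fintype ι] [DecidableEq ι] [CommRing R]
    (M : Matrix ι ι R) (σ : ι ≃ ι) (hM : M.submatrix σ σ = M) (y : ι → R) :
    (M⁻¹ *ᵥ y) ∘ σ = M⁻¹ *ᵥ (y ∘ σ) := by
  conv_rhs => rw [← hM, inv_submatrix_equiv, submatrix_mulVec_equiv]
  simp [Function.comp_def]

lemma ker_eq (κs κo κd : ℝ) (u v : ℕ × ℕ) :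
    ker κs κo κd u v = κd + (κo - κd) * (if u.1 = v.1 then 1 else 0) +
      (κo - κd) * (if u.2 = v.2 then 1 else 0) +
      (κs - κd - 2 * (κo - κd)) * (if u = v then 1 else 0) := by
  obtain ⟨j, k⟩ := u
  obtain ⟨j', k'⟩ := v
  unfold ker
  split_ifs <;> simp_all; ring

lemma ker_swap (κs κo κd : ℝ) (u v : ℕ × ℕ) : ker κs κo κd u.swap v.swap = ker κs κo κd u v := by
  simp [ker, Prod.swap_inj, or_comm]

def outflow (s : Finset (ℕ × ℕ)) (a : ℕ × ℕ → ℝ) (j : ℕ) : ℝ :=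
  ∑ u ∈ s, if j = u.1 then a u else 0

section SwapInvariant

variable {s : Finset (ℕ × ℕ)} (hs : ∀ u : ℕ × ℕ, u.swap ∈ s ↔ u ∈ s)
  {a : ℕ × ℕ → ℝ} (ha : ∀ u : ℕ × ℕ, a u.swap = -a u)
include hs

lemma sum_comp_swap_of_swap_mem_iff {M : Type*} [AddCommMonoid M] (f : ℕ × ℕ → M) :
    ∑ u ∈ s, f u.swap = ∑ u ∈ s, f u :=
  Finset.sum_nbij' Prod.swap Prod.swap (fun u hu => (hs u).2 hu) (fun u hu => (hs u).2 hu)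
    (fun _ _ => rfl) (fun _ _ => rfl) (fun _ _ => rfl)

include ha

lemma sum_eq_zero_of_antisymm : ∑ u ∈ s, a u = 0 := by
  have h := sum_comp_swap_of_swap_mem_iff hs a
  simp only [ha, Finset.sum_neg_distrib] at h
  linarith

lemma sum_ite_snd_eq_neg_outflow (k : ℕ) :
    ∑ u ∈ s, (if k = u.2 then a u else 0) = -outflow s a k := by
  rw [← sum_comp_swap_of_swap_mem_iff hs, outflow, ← Finset.sum_neg_distrib]
  refine Finset.sum_congr rfl fun u _ => ?_
  simp only [Prod.snd_swap, ha]
  split_ifs <;> simp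

lemma sum_ker_mul_of_antisymm (κs κo κd : ℝ) (v : ℕ × ℕ) :
    ∑ u ∈ s, ker κs κo κd v u * a u =
      (κo - κd) * (outflow s a v.1 - outflow s a v.2) +
        (κs - κd - 2 * (κo - κd)) * (if v ∈ s then a v else 0) := by
  have hdiag : ∑ u ∈ s, (if v = u then a u else 0) = if v ∈ s then a v else 0 :=
    Finset.sum_ite_eq s v a
  simp only [ker_eq, add_mul, Finset.sum_add_distrib, mul_assoc, ite_mul, one_mul, zero_mul,
    ← Finset.mul_sum, sum_eq_zero_of_antisymm hs ha, hdiag]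
  rw [sum_ite_snd_eq_neg_outflow hs ha]
  unfold outflow
  ring

end SwapInvariant

lemma mem_T {n p q j k : ℕ} :
    (j, k) ∈ T n p q ↔ (1 ≤ j ∧ j ≤ n - 1 ∧ k = j + 1) ∨ (1 ≤ k ∧ k ≤ n - 1 ∧ j = k + 1) ∨
      (j = p ∧ k = q) ∨ (j = q ∧ k = p) := by
  simp [T]
  omega

lemma swap_mem_T {n p q : ℕ} {u : ℕ × ℕ} : u.swap ∈ T n p q ↔ u ∈ T n p q := by
  obtain ⟨j, k⟩ := u
  simp only [Prod.swap_prod_mk, mem_T]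
  omega

lemma Kmat_posSemidef {n p q : ℕ} {κs κo κd : ℝ} (hκd : 0 ≤ κd) (hκo : κd ≤ κo)
    (hκs : 2 * (κo - κd) ≤ κs - κd) : (Kmat n p q κs κo κd).PosSemidef := by
  -- the first summand is the all-ones matrix, the case of a constant `f`
  have hK : Kmat n p q κs κo κd =
      κd • Matrix.of (fun (u v : T n p q) => if () = () then 1 else 0) +
      (κo - κd) • Matrix.of (fun u v : T n p q => if u.1.1 = v.1.1 then 1 else 0) +
      (κo - κd) • Matrix.of (fun u v : T n p q => if u.1.2 = v.1.2 then 1 else 0) +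
      (κs - κd - 2 * (κo - κd)) • (1 : Matrix (T n p q) (T n p q) ℝ) := by
    ext u v
    rw [Kmat, ker_eq]
    simp [Matrix.one_apply]
  rw [hK]
  exact ((((posSemidef_of_ite_eq _).smul hκd).add ((posSemidef_of_ite_eq _).smul
    (sub_nonneg.2 hκo))).add ((posSemidef_of_ite_eq _).smul (sub_nonneg.2 hκo))).add
    (PosSemidef.one.smul (by linarith))

lemma isUnit_Kmat_add_smul_one {n p q : ℕ} {κs κo κd c : ℝ} (hκd : 0 ≤ κd) (hκo : κd ≤ κo)
    (hκs : 2 * (κo - κd) ≤ κs - κd) (hc : 0 < c) :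
    IsUnit (Kmat n p q κs κo κd + c⁻¹ • (1 : Matrix (T n p q) (T n p q) ℝ)) :=
  (PosDef.posSemidef_add (Kmat_posSemidef hκd hκo hκs) (PosDef.one.smul (inv_pos.2 hc))).isUnit

lemma lab_swap {p q j k : ℕ} (hpq : p ≠ q) (hjk : j ≠ k) : lab p q (k, j) = -lab p q (j, k) := by
  unfold lab
  split_ifs <;> simp_all <;> omega

lemma fst_ne_snd_of_mem_T {n p q j k : ℕ} (hqp : q < p) (h : (j, k) ∈ T n p q) : j ≠ k := by
  rw [mem_T] at h
  omega

def swapT (n p q : ℕ) : T n p q ≃ T n p q :=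
  (Equiv.prodComm ℕ ℕ).subtypeEquiv fun _ => swap_mem_T.symm

@[simp]
lemma coe_swapT {n p q : ℕ} (u : T n p q) : (swapT n p q u : ℕ × ℕ) = u.1.swap := rfl

lemma dual_swapT {n p q : ℕ} (hqp : q < p) (κs κo κd c : ℝ) (u : T n p q) :
    dual n p q κs κo κd c (swapT n p q u) = -dual n p q κs κo κd c u := by
  have hM : (Kmat n p q κs κo κd + c⁻¹ • 1).submatrix (swapT n p q) (swapT n p q) =
      Kmat n p q κs κo κd + c⁻¹ • 1 := by
    ext u v
    simp [Kmat, ker_swap, one_apply]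
  have hy : (fun u : T n p q => lab p q u.1) ∘ swapT n p q = -fun u => lab p q u.1 := by
    funext ⟨⟨j, k⟩, hu⟩
    exact lab_swap hqp.ne' (fst_ne_snd_of_mem_T hqp hu)
  simpa [dual, hy, mulVec_neg] using
    congrFun (inv_mulVec_comp_equiv _ _ hM fun u : T n p q => lab p q u.1) u

lemma aAt_swap {n p q : ℕ} (hqp : q < p) (κs κo κd c : ℝ) (j k : ℕ) :
    aAt n p q κs κo κd c (k, j) = -aAt n p q κs κo κd c (j, k) := by
  have hswap : (k, j) ∈ T n p q ↔ (j, k) ∈ T n p q := swap_mem_T (u := (j, k))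
  by_cases h : (j, k) ∈ T n p q
  · rw [aAt, aAt, dif_pos h, dif_pos (hswap.2 h)]
    exact dual_swapT hqp κs κo κd c ⟨(j, k), h⟩
  · rw [aAt, aAt, dif_neg h, dif_neg (mt hswap.1 h), neg_zero]

section TrainingSet

variable {n p q : ℕ} {κs κo κd c : ℝ}

lemma aAt_eq_zero_of_not_mem {u : ℕ × ℕ} (hu : u ∉ T n p q) : aAt n p q κs κo κd c u = 0 :=
  dif_neg hu

lemma bbar_zero (hq1 : 1 ≤ q) (hgap : 2 ≤ p - q) : bbar n p q κs κo κd c 0 = 0 :=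
  aAt_eq_zero_of_not_mem (by rw [mem_T]; omega)

lemma bbar_self (hpn : p ≤ n) (hgap : 2 ≤ p - q) : bbar n p q κs κo κd c n = 0 :=
  aAt_eq_zero_of_not_mem (by rw [mem_T]; omega)

lemma aAt_sub_one (hq1 : 1 ≤ q) (hgap : 2 ≤ p - q) (j : ℕ) :
    aAt n p q κs κo κd c (j, j - 1) = -bbar n p q κs κo κd c (j - 1) := by
  rcases j with _ | j
  · rw [bbar_zero hq1 hgap, aAt_eq_zero_of_not_mem (by rw [mem_T]; omega), neg_zero]
  · exact aAt_swap (by omega) κs κo κd c j (j + 1)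

lemma outflow_T (hq1 : 1 ≤ q) (hgap : 2 ≤ p - q) (j : ℕ) :
    outflow (T n p q) (aAt n p q κs κo κd c) j =
      bbar n p q κs κo κd c j - bbar n p q κs κo κd c (j - 1) +
        hbar n p q κs κo κd c * ((if j = p then 1 else 0) - (if j = q then 1 else 0)) := by
  -- the pairs of `T` with first coordinate `j` lie in `S`, whose elements are distinct
  -- because `p - q ≥ 2`
  let S : Finset (ℕ × ℕ) := {(j, j + 1), (j, j - 1), (p, q), (q, p)}
  have hTS : outflow (T n p q) (aAt n p q κs κo κd c) j =
      ∑ u ∈ S, if j = u.1 then aAt n p q κs κo κd c u else 0 := by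
    rw [outflow, Finset.sum_subset (Finset.subset_union_left (s₂ := S)),
      ← Finset.sum_subset (Finset.subset_union_right (s₁ := T n p q))]
    · rintro ⟨j', k⟩ hu hS
      have hT : (j', k) ∈ T n p q := by simpa [hS] using hu
      rw [mem_T] at hT
      rw [if_neg]
      rintro rfl
      simp [S] at hS
      omega
    · intro u _ hT
      simp [aAt_eq_zero_of_not_mem hT]
  rw [hTS, Finset.sum_insert (by simp; omega), Finset.sum_insert (by simp; omega),
    Finset.sum_pair (by simp; omega), if_pos rfl, if_pos rfl, aAt_sub_one hq1 hgap,
    aAt_swap (by omega) κs κo κd c p q]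
  unfold bbar hbar
  split_ifs <;> ring

end TrainingSet

section Dual

variable {n p q : ℕ} {κs κo κd c : ℝ}

lemma aAt_coe (u : T n p q) : aAt n p q κs κo κd c u = dual n p q κs κo κd c u :=
  dif_pos u.2

lemma rank_eq_mul_outflow (hq1 : 1 ≤ q) (hgap : 2 ≤ p - q) (j : ℕ) :
    rank n p q κs κo κd c j = (κo - κd) * outflow (T n p q) (aAt n p q κs κo κd c) j := by
  rw [outflow_T hq1 hgap, rank]
  ring

lemma pred_eq (hq1 : 1 ≤ q) (hgap : 2 ≤ p - q) (v : ℕ × ℕ) :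
    pred n p q κs κo κd c v = rank n p q κs κo κd c v.1 - rank n p q κs κo κd c v.2 +
      (κs - κd - 2 * (κo - κd)) * aAt n p q κs κo κd c v := by
  have hsum : pred n p q κs κo κd c v =
      ∑ u ∈ T n p q, ker κs κo κd v u * aAt n p q κs κo κd c u := by
    rw [pred, ← Finset.sum_coe_sort (T n p q)]
    exact Finset.sum_congr rfl fun u _ => by rw [aAt_coe]
  have hdiag : (if v ∈ T n p q then aAt n p q κs κo κd c v else 0) = aAt n p q κs κo κd c v := by
    split_ifs with h
    · rfl
    · exact (aAt_eq_zero_of_not_mem h).symm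
  rw [hsum, sum_ker_mul_of_antisymm (fun _ => swap_mem_T)
    (fun u => aAt_swap (by omega) κs κo κd c u.1 u.2), hdiag, rank_eq_mul_outflow hq1 hgap,
    rank_eq_mul_outflow hq1 hgap]
  ring

lemma pred_add_inv_mul_dual (hκd : 0 ≤ κd) (hκo : κd ≤ κo) (hκs : 2 * (κo - κd) ≤ κs - κd)
    (hc : 0 < c) (u : T n p q) :
    pred n p q κs κo κd c u + c⁻¹ * dual n p q κs κo κd c u = lab p q u := by
  have hM : IsUnit (Kmat n p q κs κo κd + c⁻¹ • 1) := isUnit_Kmat_add_smul_one hκd hκo hκs hc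
  have h : (Kmat n p q κs κo κd + c⁻¹ • 1) *ᵥ dual n p q κs κo κd c = fun u => lab p q u.1 := by
    rw [dual, mulVec_mulVec, mul_nonsing_inv _ ((isUnit_iff_isUnit_det _).1 hM), one_mulVec]
  have hu := congrFun h u
  rw [add_mulVec, smul_mulVec, one_mulVec] at hu
  exact hu

lemma normal_equation (hq1 : 1 ≤ q) (hgap : 2 ≤ p - q) (hκd : 0 ≤ κd) (hκo : κd ≤ κo)
    (hκs : 2 * (κo - κd) ≤ κs - κd) (hc : 0 < c) {v : ℕ × ℕ} (hv : v ∈ T n p q) :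
    rank n p q κs κo κd c v.1 - rank n p q κs κo κd c v.2 +
      (κs - κd - 2 * (κo - κd) + c⁻¹) * aAt n p q κs κo κd c v = lab p q v := by
  rw [← pred_add_inv_mul_dual hκd hκo hκs hc ⟨v, hv⟩, pred_eq hq1 hgap, ← aAt_coe]
  ring

end Dual

lemma Bmat_mulVec {n : ℕ} (α ctil : ℝ) {w : ℕ → ℝ} (hw0 : w 0 = 0) (hwn : w n = 0)
    (i : Fin (n - 1)) :
    (Bmat n α ctil *ᵥ fun j : Fin (n - 1) => w (j + 1)) i =
      (1 + ctil⁻¹) * w (i + 1) - (1 - α) / 2 * (w i + w (i + 2)) := by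
  let e : ℕ → ℝ := fun k => (1 + ctil⁻¹) * (if k = i + 1 then 1 else 0) -
    (1 - α) / 2 * ((if k = i then 1 else 0) + (if k = i + 2 then 1 else 0))
  have hentry (j : Fin (n - 1)) : Bmat n α ctil i j = e (j + 1) := by
    simp only [Bmat, e, Fin.ext_iff]
    split_ifs <;> first | omega | ring
  have hi := i.isLt
  have hn : n = n - 1 + 1 := by omega
  calc (Bmat n α ctil *ᵥ fun j : Fin (n - 1) => w (j + 1)) i
      = ∑ j ∈ Finset.range (n - 1), e (j + 1) * w (j + 1) := by
        simp only [mulVec, dotProduct, hentry]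
        exact Fin.sum_univ_eq_sum_range (fun j => e (j + 1) * w (j + 1)) (n - 1)
    _ = ∑ k ∈ Finset.range (n + 1), e k * w k := by
        rw [Finset.sum_range_succ, hwn, mul_zero, add_zero, hn, Finset.sum_range_succ', hw0,
          mul_zero, add_zero, ← hn]
    _ = (1 + ctil⁻¹) * w (i + 1) - (1 - α) / 2 * (w i + w (i + 2)) := by
        have h0 : (i : ℕ) ≤ n := by omega
        have h1 : (i : ℕ) < n := by omega
        have h2 : (i : ℕ) + 2 < n + 1 := by omega
        simp [e, sub_mul, add_mul, Finset.sum_sub_distrib, Finset.sum_add_distrib, ite_mul,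
          mul_assoc, ← Finset.mul_sum, h0, h1, h2]

lemma stdBasis_sub_one (n m : ℕ) (i : Fin (n - 1)) :
    stdBasis n (m - 1) i = if (i : ℕ) + 2 = m then 1 else 0 := by
  simp only [stdBasis]
  congr 1
  apply propext
  omega

lemma lab_succ {p q : ℕ} (hgap : 2 ≤ p - q) (j : ℕ) : lab p q (j, j + 1) = 1 := by
  simp only [lab, Prod.mk.injEq]
  split_ifs <;> first | rfl | omega

section ReducedEquations

variable {n p q : ℕ} {κs κo κd c : ℝ} (hq1 : 1 ≤ q) (hgap : 2 ≤ p - q) (hκd : 0 ≤ κd)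
  (hκo : κd ≤ κo) (hκs : 2 * (κo - κd) ≤ κs - κd) (hc : 0 < c)
include hq1 hgap hκd hκo hκs hc

lemma bbar_equation {j : ℕ} (hj1 : 1 ≤ j) (hjn : j ≤ n - 1) :
    (κs - κd + c⁻¹) * bbar n p q κs κo κd c j -
        (κo - κd) * (bbar n p q κs κo κd c (j - 1) + bbar n p q κs κo κd c (j + 1)) =
      1 - (κo - κd) * hbar n p q κs κo κd c *
        ((if j = p then 1 else 0) + (if j + 1 = q then 1 else 0) -
          (if j = q then 1 else 0) - (if j + 1 = p then 1 else 0)) := by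
  have h : rank n p q κs κo κd c j - rank n p q κs κo κd c (j + 1) +
      (κs - κd - 2 * (κo - κd) + c⁻¹) * bbar n p q κs κo κd c j = lab p q (j, j + 1) :=
    normal_equation hq1 hgap hκd hκo hκs hc (v := (j, j + 1)) (by rw [mem_T]; omega)
  rw [lab_succ hgap] at h
  simp only [rank, Nat.add_sub_cancel] at h
  linear_combination h

lemma hbar_equation :
    (κs - κd + c⁻¹) * hbar n p q κs κo κd c +
        (κo - κd) * (bbar n p q κs κo κd c (q - 1) + bbar n p q κs κo κd c p -
          bbar n p q κs κo κd c q - bbar n p q κs κo κd c (p - 1)) = 1 := by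
  have h : rank n p q κs κo κd c p - rank n p q κs κo κd c q +
      (κs - κd - 2 * (κo - κd) + c⁻¹) * hbar n p q κs κo κd c = lab p q (p, q) :=
    normal_equation hq1 hgap hκd hκo hκs hc (v := (p, q)) (by rw [mem_T]; omega)
  simp only [lab, rank, if_pos, if_neg (show p ≠ q by omega), if_neg (show q ≠ p by omega)] at h
  linear_combination h

end ReducedEquations

theorem reduced_linear_system_general
    (n p q : ℕ) (κs κo κd c : ℝ)
    (hq1 : 1 ≤ q) (hpn : p ≤ n) (hgap : 2 ≤ p - q)
    (hκd : 0 ≤ κd) (hκo : κd < κo) (hκs : 2 * (κo - κd) ≤ κs - κd) (hc : 0 < c) :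
    (∀ i : Fin (n - 1),
      (κs - κd) *
          (Bmat n (1 - 2 * (κo - κd) / (κs - κd)) (c * (κs - κd)) *ᵥ
            fun i' : Fin (n - 1) => bbar n p q κs κo κd c ((i' : ℕ) + 1)) i =
        1 - (κo - κd) * hbar n p q κs κo κd c *
          (stdBasis n p i + stdBasis n (q - 1) i - stdBasis n q i -
            stdBasis n (p - 1) i)) ∧
    (κs - κd) * (1 + (c * (κs - κd))⁻¹) * hbar n p q κs κo κd c +
        (κo - κd) * (bbar n p q κs κo κd c (q - 1) + bbar n p q κs κo κd c p -
          bbar n p q κs κo κd c q - bbar n p q κs κo κd c (p - 1)) = 1 := by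
  have hδs : κs - κd ≠ 0 := by linarith
  have hdiag : (κs - κd) * (1 + (c * (κs - κd))⁻¹) = κs - κd + c⁻¹ := by
    field_simp
  have hoff : (κs - κd) * ((1 - (1 - 2 * (κo - κd) / (κs - κd))) / 2) = κo - κd := by
    field_simp
    ring
  refine ⟨fun i => ?_, hdiag ▸ hbar_equation hq1 hgap hκd hκo.le hκs hc⟩
  have h := bbar_equation (n := n) hq1 hgap hκd hκo.le hκs hc (j := (i : ℕ) + 1) (by omega)
    (by have := i.isLt; omega)
  rw [Bmat_mulVec _ _ (bbar_zero hq1 hgap) (bbar_self hpn hgap), stdBasis_sub_one,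
    stdBasis_sub_one, stdBasis, stdBasis, mul_sub, ← mul_assoc, ← mul_assoc, hdiag, hoff]
  rw [Nat.add_sub_cancel, show (i : ℕ) + 1 + 1 = i + 2 from rfl] at h
  linear_combination h

/-- The reduced dual coefficients satisfy the reduced `(n−1)`-dimensional linear
system. Here `α = 1 − 2δₒ/δₛ` and `c̃ = c·δₛ`. -/
theorem reduced_linear_system
    (n p q : ℕ) (κs κo κd c : ℝ)
    (hn : 3 ≤ n) (hq1 : 1 ≤ q) (hqp : q < p) (hpn : p ≤ n) (hgap : 2 ≤ p - q)
    (hκd : 0 ≤ κd) (hκo : κd < κo) (hκs : 2 * (κo - κd) ≤ κs - κd) (hc : 0 < c) :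
    (∀ i : Fin (n - 1),
      (κs - κd) *
          (Bmat n (1 - 2 * (κo - κd) / (κs - κd)) (c * (κs - κd)) *ᵥ
            fun i' : Fin (n - 1) => bbar n p q κs κo κd c ((i' : ℕ) + 1)) i =
        1 - (κo - κd) * hbar n p q κs κo κd c *
          (stdBasis n p i + stdBasis n (q - 1) i - stdBasis n q i -
            stdBasis n (p - 1) i)) ∧
    (κs - κd) * (1 + (c * (κs - κd))⁻¹) * hbar n p q κs κo κd c +
        (κo - κd) * (bbar n p q κs κo κd c (q - 1) + bbar n p q κs κo κd c p -
          bbar n p q κs κo κd c q - bbar n p q κs κo κd c (p - 1)) = 1 :=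
  reduced_linear_system_general n p q κs κo κd c hq1 hpn hgap hκd hκo hκs hc

end TIExc
end
end

section
/- Under the TI-with-exceptions kernel ridge regression setup, the emergent ranks r_j := δ_o(b̄_j − b̄_{j−1}) + δ_o·h̄·([j = p] − [j = q]) are strictly decreasing within each transitive section: r_j > r_{j'} whenever 1 ≤ j < j' ≤ q, and r_j > r_{j'} whenever p ≤ j < j' ≤ n. Consequently, for any pair (j,k) not in T with j < k and both j, k in {1,…,q} or both in {p,…,n}, the model prediction satisfies f(j,k) > 0, i.e., within-section transitive generalization succeeds. -/
open Real Matrix Finset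

noncomputable section

namespace TIExc

variable {t dd m0 : ℝ} {n p q : ℕ}

def uu (t : ℝ) : ℕ → ℝ
  | 0 => 0
  | 1 => 1
  | (k+2) => t * uu t (k+1) - uu t k

lemma uu_zero (t : ℝ) : uu t 0 = 0 := rfl
lemma uu_one (t : ℝ) : uu t 1 = 1 := rfl
lemma uu_rec (t : ℝ) (k : ℕ) : uu t (k+2) = t * uu t (k+1) - uu t k := rfl

lemma uu_key (ht : 2 < t) : ∀ k, 0 ≤ uu t k ∧ uu t k < uu t (k+1) := by
  intro k
  induction k with
  | zero => simp [uu_zero, uu_one]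
  | succ m ih =>
    have h1 : 0 ≤ uu t (m+1) := le_of_lt (lt_of_le_of_lt ih.1 ih.2)
    refine ⟨h1, ?_⟩
    rw [uu_rec]
    nlinarith [ih.1, ih.2]

lemma uu_nonneg (ht : 2 < t) (k : ℕ) : 0 ≤ uu t k := (uu_key ht k).1
lemma uu_lt_succ (ht : 2 < t) (k : ℕ) : uu t k < uu t (k+1) := (uu_key ht k).2

lemma uu_mono (ht : 2 < t) : Monotone (uu t) :=
  monotone_nat_of_le_succ (fun k => le_of_lt (uu_lt_succ ht k))

lemma uu_pos (ht : 2 < t) {k : ℕ} (hk : 1 ≤ k) : 0 < uu t k :=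
  lt_of_lt_of_le (by norm_num [uu_one]) (uu_mono ht hk)

lemma uuD_mono (ht : 2 < t) : StrictMono (fun k => uu t (k+1) - uu t k) := by
  apply strictMono_nat_of_lt_succ
  intro k
  have h := uu_pos ht (Nat.succ_le_succ (Nat.zero_le k))
  have : uu t (k+2) = t * uu t (k+1) - uu t k := uu_rec t k
  nlinarith

lemma uuD_pos (ht : 2 < t) (k : ℕ) : 0 < uu t (k+1) - uu t k :=
  sub_pos.mpr (uu_lt_succ ht k)

lemma uuD_lt (ht : 2 < t) {j k : ℕ} (h : j < k) :
    uu t (j+1) - uu t j < uu t (k+1) - uu t k := (uuD_mono ht) h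

lemma uu_recEq (htt : dd * t = 2 * dd + m0) {m : ℕ} (hm : 1 ≤ m) :
    dd * (2 * uu t m - uu t (m-1) - uu t (m+1)) + m0 * uu t m = 0 := by
  obtain ⟨k, rfl⟩ : ∃ k, m = k + 1 := ⟨m - 1, by omega⟩
  have h2 : uu t (k+2) = t * uu t (k+1) - uu t k := uu_rec t k
  simp only [Nat.add_sub_cancel]
  have hm0 : m0 = dd * t - 2 * dd := by linarith
  rw [hm0, h2]; ring

lemma uu_W (t : ℝ) (n : ℕ) : ∀ k, k + 1 ≤ n →
    uu t (k+1) * uu t (n-k) - uu t k * uu t (n-k-1) = uu t n := by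
  intro k
  induction k with
  | zero => intro h; simp [uu_zero, uu_one]
  | succ m ih =>
    intro h
    have hprev := ih (by omega)
    obtain ⟨r, hr⟩ : ∃ r, n - m = r + 2 := ⟨n - m - 2, by omega⟩
    rw [show n - (m+1) = r + 1 from by omega]
    simp only [Nat.add_sub_cancel]
    rw [hr] at hprev
    norm_num at hprev
    rw [uu_rec t m, uu_rec t r] at *
    nlinarith [hprev]

/-- Green's kernel. -/
def gg (t : ℝ) (n k j : ℕ) : ℝ := uu t (min j k) * uu t (n - max j k)

lemma gLrec (htt : dd * t = 2 * dd + m0) {j k : ℕ} (hj1 : 1 ≤ j) (hjn : j ≤ n - 1)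
    (hk : k ≤ n) (hn : 1 ≤ n) :
    dd * (2 * gg t n k j - gg t n k (j-1) - gg t n k (j+1)) + m0 * gg t n k j
      = if j = k then dd * uu t n else 0 := by
  rcases lt_trichotomy j k with hlt | heq | hgt
  · rw [if_neg (by omega)]
    simp only [gg, show min j k = j from by omega, show min (j-1) k = j-1 from by omega,
      show min (j+1) k = j+1 from by omega, show max j k = k from by omega,
      show max (j-1) k = k from by omega, show max (j+1) k = k from by omega]
    linear_combination (uu t (n - k)) * uu_recEq htt hj1
  · subst heq
    rw [if_pos rfl]
    simp only [gg, min_self, max_self, show min (j-1) j = j-1 from by omega,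
      show max (j-1) j = j from by omega, show min (j+1) j = j from by omega,
      show max (j+1) j = j+1 from by omega, show n - (j+1) = n - j - 1 from by omega]
    linear_combination (uu t (n - j)) * uu_recEq htt hj1 + dd * uu_W t n j (by omega)
  · rw [if_neg (by omega)]
    simp only [gg, show min j k = k from by omega, show min (j-1) k = k from by omega,
      show min (j+1) k = k from by omega, show max j k = j from by omega,
      show max (j-1) k = j-1 from by omega, show max (j+1) k = j+1 from by omega]
    rw [show n - (j-1) = (n-j)+1 from by omega, show n - (j+1) = (n-j)-1 from by omega]
    linear_combination (uu t k) * uu_recEq htt (show 1 ≤ n - j from by omega)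

def psiF (t dd : ℝ) (n p q j : ℕ) : ℝ :=
  (gg t n (q-1) j - gg t n q j - gg t n (p-1) j + gg t n p j) / (dd * uu t n)

def betaF (t m0 : ℝ) (n j : ℕ) : ℝ := 1/m0 - (uu t j + uu t (n-j)) / (m0 * uu t n)

def epsF (p q j : ℕ) : ℝ :=
  (if j = p then (1:ℝ) else 0) - (if j = q then 1 else 0)
    + (if j+1 = q then 1 else 0) - (if j+1 = p then 1 else 0)

lemma psiF_rec (ht : 2 < t) (htt : dd * t = 2 * dd + m0) (hdd : 0 < dd)
    (hq1 : 1 ≤ q) (hqp : q + 2 ≤ p) (hpn : p ≤ n)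
    {j : ℕ} (hj1 : 1 ≤ j) (hjn : j ≤ n - 1) :
    dd * (2 * psiF t dd n p q j - psiF t dd n p q (j-1) - psiF t dd n p q (j+1))
      + m0 * psiF t dd n p q j = epsF p q j := by
  have hn1 : 1 ≤ n := by omega
  have h1 := gLrec (k := q-1) htt hj1 hjn (by omega) hn1
  have h2 := gLrec (k := q) htt hj1 hjn (by omega) hn1
  have h3 := gLrec (k := p-1) htt hj1 hjn (by omega) hn1
  have h4 := gLrec (k := p) htt hj1 hjn (by omega) hn1
  have hω : dd * uu t n ≠ 0 := by
    have := uu_pos ht hn1; positivity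
  have num : dd * (2 * (gg t n (q-1) j - gg t n q j - gg t n (p-1) j + gg t n p j)
      - (gg t n (q-1) (j-1) - gg t n q (j-1) - gg t n (p-1) (j-1) + gg t n p (j-1))
      - (gg t n (q-1) (j+1) - gg t n q (j+1) - gg t n (p-1) (j+1) + gg t n p (j+1)))
      + m0 * (gg t n (q-1) j - gg t n q j - gg t n (p-1) j + gg t n p j)
      = epsF p q j * (dd * uu t n) := by
    have hrw : epsF p q j * (dd * uu t n)
        = (if j = q-1 then dd * uu t n else 0) - (if j = q then dd * uu t n else 0)
          - (if j = p-1 then dd * uu t n else 0) + (if j = p then dd * uu t n else 0) := by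
      unfold epsF
      split_ifs <;> first | (exfalso; omega) | ring
    rw [hrw]
    linear_combination h1 - h2 - h3 + h4
  have hp : ∀ i, psiF t dd n p q i * (dd * uu t n)
      = gg t n (q-1) i - gg t n q i - gg t n (p-1) i + gg t n p i := by
    intro i; unfold psiF; exact div_mul_cancel₀ _ hω
  apply mul_right_cancel₀ hω
  linear_combination (2*dd + m0) * hp j - dd * hp (j-1) - dd * hp (j+1) + num

lemma betaF_rec (ht : 2 < t) (htt : dd * t = 2 * dd + m0) (hm0 : 0 < m0) (hn : 1 ≤ n)
    {j : ℕ} (hj1 : 1 ≤ j) (hjn : j ≤ n - 1) :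
    dd * (2 * betaF t m0 n j - betaF t m0 n (j-1) - betaF t m0 n (j+1))
      + m0 * betaF t m0 n j = 1 := by
  have hU : uu t n ≠ 0 := ne_of_gt (uu_pos ht hn)
  have r1 := uu_recEq htt hj1 (t := t) (dd := dd) (m0 := m0)
  have r2 := uu_recEq htt (show 1 ≤ n - j from by omega) (t := t) (dd := dd) (m0 := m0)
  rw [show (n-j)-1 = n-(j+1) from by omega, show (n-j)+1 = n-(j-1) from by omega] at r2
  have hm0' : m0 ≠ 0 := ne_of_gt hm0
  have hMU : m0 * uu t n ≠ 0 := mul_ne_zero hm0' hU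
  have hb : ∀ i, betaF t m0 n i * (m0 * uu t n) = uu t n - (uu t i + uu t (n-i)) := by
    intro i; unfold betaF; field_simp
  apply mul_right_cancel₀ hMU
  linear_combination (2*dd + m0) * hb j - dd * hb (j-1) - dd * hb (j+1) - r1 - r2


/-- point evaluations of the kernel -/
lemma gg_left {j k : ℕ} (h : j ≤ k) : gg t n k j = uu t j * uu t (n - k) := by
  rw [gg, min_eq_left h, max_eq_right h]

lemma gg_right {j k : ℕ} (h : k ≤ j) : gg t n k j = uu t k * uu t (n - j) := by
  rw [gg, min_eq_right h, max_eq_left h]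

def ePsi (t dd : ℝ) (n p q : ℕ) : ℝ :=
  psiF t dd n p q (q-1) - psiF t dd n p q q - psiF t dd n p q (p-1) + psiF t dd n p q p

def eBeta (t m0 : ℝ) (n p q : ℕ) : ℝ :=
  betaF t m0 n (q-1) - betaF t m0 n q - betaF t m0 n (p-1) + betaF t m0 n p

def hstarF (t dd m0 : ℝ) (n p q : ℕ) : ℝ :=
  (1 - dd * eBeta t m0 n p q) / (m0 + 2*dd - dd^2 * ePsi t dd n p q)

def bstarF (t dd m0 : ℝ) (n p q : ℕ) (j : ℕ) : ℝ :=
  betaF t m0 n j - dd * hstarF t dd m0 n p q * psiF t dd n p q j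

lemma betaF_mul (hm0 : m0 ≠ 0) (hU : uu t n ≠ 0) (i : ℕ) :
    betaF t m0 n i * (m0 * uu t n) = uu t n - (uu t i + uu t (n-i)) := by
  unfold betaF; field_simp

lemma psiF_mul (hdd : dd ≠ 0) (hU : uu t n ≠ 0) (i : ℕ) :
    psiF t dd n p q i * (dd * uu t n)
      = gg t n (q-1) i - gg t n q i - gg t n (p-1) i + gg t n p i := by
  unfold psiF; field_simp

/-- ψ ≥ 0 on the left section. -/
lemma psiF_nonneg_left (ht : 2 < t) (hdd : 0 < dd) (hq1 : 1 ≤ q) (hqp : q + 2 ≤ p)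
    (hpn : p ≤ n) {j : ℕ} (hj : j ≤ q - 1) :
    0 ≤ psiF t dd n p q j := by
  have hU : 0 < uu t n := uu_pos ht (by omega)
  unfold psiF
  rw [gg_left (by omega), gg_left (by omega), gg_left (by omega), gg_left (by omega)]
  have key : uu t (n-(p-1)) - uu t (n-p) ≤ uu t (n-(q-1)) - uu t (n-q) := by
    have := uuD_lt ht (show n - p < n - q by omega)
    rw [show n-p+1 = n-(p-1) from by omega, show n-q+1 = n-(q-1) from by omega] at this
    linarith
  have hj0 : 0 ≤ uu t j := uu_nonneg ht j
  have : 0 ≤ uu t j * (uu t (n-(q-1)) - uu t (n-q) - uu t (n-(p-1)) + uu t (n-p)) := by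
    apply mul_nonneg hj0; linarith
  apply div_nonneg (by linarith [this]) (by positivity)

/-- ψ ≥ 0 on the right section. -/
lemma psiF_nonneg_right (ht : 2 < t) (hdd : 0 < dd) (hq1 : 1 ≤ q) (hqp : q + 2 ≤ p)
    (hpn : p ≤ n) {j : ℕ} (hj : p ≤ j) :
    0 ≤ psiF t dd n p q j := by
  have hU : 0 < uu t n := uu_pos ht (by omega)
  unfold psiF
  rw [gg_right (by omega), gg_right (by omega), gg_right (by omega), gg_right (by omega)]
  have key : uu t q - uu t (q-1) ≤ uu t p - uu t (p-1) := by
    have := uuD_lt ht (show q - 1 < p - 1 by omega)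
    rw [show q-1+1 = q from by omega, show p-1+1 = p from by omega] at this
    linarith
  have hnj : 0 ≤ uu t (n-j) := uu_nonneg ht _
  have : 0 ≤ (uu t (q-1) - uu t q - uu t (p-1) + uu t p) * uu t (n-j) := by
    apply mul_nonneg _ hnj; linarith
  apply div_nonneg (by linarith [this]) (by positivity)

lemma Dh_pos (ht : 2 < t) (hdd : 0 < dd) (hm0 : 0 < m0) (hq1 : 1 ≤ q) (hqp : q + 2 ≤ p)
    (hpn : p ≤ n) :
    0 < m0 + 2*dd - dd^2 * ePsi t dd n p q := by
  have hU : 0 < uu t n := uu_pos ht (by omega)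
  have hUne : uu t n ≠ 0 := ne_of_gt hU
  -- the four point values
  have e1 : psiF t dd n p q (q-1) * (dd * uu t n)
      = uu t (q-1) * (uu t (n-(q-1)) - uu t (n-q) - uu t (n-(p-1)) + uu t (n-p)) := by
    rw [psiF_mul (ne_of_gt hdd) hUne, gg_left (by omega), gg_left (by omega),
      gg_left (by omega), gg_left (by omega)]; ring
  have e2 : psiF t dd n p q q * (dd * uu t n)
      = uu t (q-1) * uu t (n-q) - uu t q * uu t (n-q) - uu t q * uu t (n-(p-1))
        + uu t q * uu t (n-p) := by
    rw [psiF_mul (ne_of_gt hdd) hUne, gg_right (by omega), gg_left (by omega),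
      gg_left (by omega), gg_left (by omega)]; try ring
  have e3 : psiF t dd n p q (p-1) * (dd * uu t n)
      = uu t (q-1) * uu t (n-(p-1)) - uu t q * uu t (n-(p-1))
        - uu t (p-1) * uu t (n-(p-1)) + uu t (p-1) * uu t (n-p) := by
    rw [psiF_mul (ne_of_gt hdd) hUne, gg_right (by omega), gg_right (by omega),
      gg_left (by omega), gg_left (by omega)]; try ring
  have e4 : psiF t dd n p q p * (dd * uu t n)
      = uu t (q-1) * uu t (n-p) - uu t q * uu t (n-p) - uu t (p-1) * uu t (n-p)
        + uu t p * uu t (n-p) := by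
    rw [psiF_mul (ne_of_gt hdd) hUne, gg_right (by omega), gg_right (by omega),
      gg_right (by omega), gg_right (by omega)]; try ring
  -- Wronskian identities
  have w1 := uu_W t n (q-1) (by omega)
  rw [show q-1+1 = q from by omega, show n-(q-1)-1 = n-q from by omega] at w1
  have w2 := uu_W t n (p-1) (by omega)
  rw [show p-1+1 = p from by omega, show n-(p-1)-1 = n-p from by omega] at w2
  -- increment facts
  have hA : 0 < uu t q - uu t (q-1) := by
    have := uuD_pos ht (q-1); rw [show q-1+1 = q from by omega] at this; linarith
  have hDD : 0 < uu t (n-(p-1)) - uu t (n-p) := by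
    have := uuD_pos ht (n-p); rw [show n-p+1 = n-(p-1) from by omega] at this; linarith
  have hBD : 0 < (uu t (n-(q-1)) - uu t (n-q)) - (uu t (n-(p-1)) - uu t (n-p)) := by
    have := uuD_lt ht (show n - p < n - q by omega)
    rw [show n-p+1 = n-(p-1) from by omega, show n-q+1 = n-(q-1) from by omega] at this
    linarith
  have hCA : 0 < (uu t p - uu t (p-1)) - (uu t q - uu t (q-1)) := by
    have := uuD_lt ht (show q - 1 < p - 1 by omega)
    rw [show q-1+1 = q from by omega, show p-1+1 = p from by omega] at this
    linarith
  have key : ePsi t dd n p q * (dd * uu t n) < 2 * uu t n := by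
    have expand : 2 * uu t n - ePsi t dd n p q * (dd * uu t n)
        = (uu t q - uu t (q-1)) * ((uu t (n-(q-1)) - uu t (n-q)) - (uu t (n-(p-1)) - uu t (n-p)))
          + ((uu t p - uu t (p-1)) - (uu t q - uu t (q-1))) * (uu t (n-(p-1)) - uu t (n-p)) := by
      have : ePsi t dd n p q * (dd * uu t n)
          = psiF t dd n p q (q-1) * (dd * uu t n) - psiF t dd n p q q * (dd * uu t n)
            - psiF t dd n p q (p-1) * (dd * uu t n) + psiF t dd n p q p * (dd * uu t n) := by
        unfold ePsi; ring
      rw [this, e1, e2, e3, e4]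
      linear_combination -w1 - w2
    nlinarith [mul_pos hA hBD, mul_pos hCA hDD]
  -- conclude
  have h2 : dd^2 * ePsi t dd n p q < 2 * dd := by
    nlinarith [key, hU, hdd, mul_pos hdd hU]
  linarith

lemma eBeta_neg (ht : 2 < t) (hm0 : 0 < m0) (hq1 : 1 ≤ q) (hqp : q + 2 ≤ p) (hpn : p ≤ n) :
    eBeta t m0 n p q < 0 := by
  have hU : 0 < uu t n := uu_pos ht (by omega)
  have hMU : 0 < m0 * uu t n := by positivity
  have hb := betaF_mul (t := t) (n := n) (ne_of_gt hm0) (ne_of_gt hU)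
  have hBD : 0 < (uu t (n-(q-1)) - uu t (n-q)) - (uu t (n-(p-1)) - uu t (n-p)) := by
    have := uuD_lt ht (show n - p < n - q by omega)
    rw [show n-p+1 = n-(p-1) from by omega, show n-q+1 = n-(q-1) from by omega] at this
    linarith
  have hCA : 0 < (uu t p - uu t (p-1)) - (uu t q - uu t (q-1)) := by
    have := uuD_lt ht (show q - 1 < p - 1 by omega)
    rw [show q-1+1 = q from by omega, show p-1+1 = p from by omega] at this
    linarith
  have key : eBeta t m0 n p q * (m0 * uu t n)
      = -(((uu t p - uu t (p-1)) - (uu t q - uu t (q-1)))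
          + ((uu t (n-(q-1)) - uu t (n-q)) - (uu t (n-(p-1)) - uu t (n-p)))) := by
    have : eBeta t m0 n p q * (m0 * uu t n)
        = betaF t m0 n (q-1) * (m0 * uu t n) - betaF t m0 n q * (m0 * uu t n)
          - betaF t m0 n (p-1) * (m0 * uu t n) + betaF t m0 n p * (m0 * uu t n) := by
      unfold eBeta; ring
    rw [this, hb, hb, hb, hb]; ring
  by_contra hcon
  push_neg at hcon
  nlinarith [mul_nonneg hcon (le_of_lt hMU)]

lemma hstarF_pos (ht : 2 < t) (hdd : 0 < dd) (hm0 : 0 < m0) (hq1 : 1 ≤ q) (hqp : q + 2 ≤ p)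
    (hpn : p ≤ n) : 0 < hstarF t dd m0 n p q := by
  have h1 := eBeta_neg (t := t) (m0 := m0) ht hm0 hq1 hqp hpn
  have h2 := Dh_pos (t := t) (dd := dd) (m0 := m0) ht hdd hm0 hq1 hqp hpn
  unfold hstarF
  apply div_pos _ h2
  nlinarith

/-- boundary values -/
lemma psiF_zero : psiF t dd n p q 0 = 0 := by
  simp [psiF, gg, Nat.zero_min, uu_zero]

lemma psiF_n (hq1 : 1 ≤ q) (hqp : q + 2 ≤ p) (hpn : p ≤ n) : psiF t dd n p q n = 0 := by
  unfold psiF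
  rw [gg_right (by omega), gg_right (by omega), gg_right (by omega), gg_right (by omega)]
  simp [Nat.sub_self, uu_zero]

lemma betaF_zero (hm0 : m0 ≠ 0) (hU : uu t n ≠ 0) : betaF t m0 n 0 = 0 := by
  unfold betaF
  rw [uu_zero, Nat.sub_zero]
  field_simp
  ring

lemma betaF_n (hm0 : m0 ≠ 0) (hU : uu t n ≠ 0) : betaF t m0 n n = 0 := by
  unfold betaF
  rw [Nat.sub_self, uu_zero]
  field_simp
  ring

lemma bstarF_zero (hm0 : m0 ≠ 0) (hU : uu t n ≠ 0) : bstarF t dd m0 n p q 0 = 0 := by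
  unfold bstarF
  rw [betaF_zero hm0 hU, psiF_zero]; ring

lemma bstarF_n (hm0 : m0 ≠ 0) (hU : uu t n ≠ 0) (hq1 : 1 ≤ q) (hqp : q + 2 ≤ p) (hpn : p ≤ n) :
    bstarF t dd m0 n p q n = 0 := by
  unfold bstarF
  rw [betaF_n hm0 hU, psiF_n hq1 hqp hpn]; ring

/-- the main interior equation for the candidate. -/
lemma bstarF_L (ht : 2 < t) (htt : dd * t = 2 * dd + m0) (hdd : 0 < dd) (hm0 : 0 < m0)
    (hq1 : 1 ≤ q) (hqp : q + 2 ≤ p) (hpn : p ≤ n)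
    {j : ℕ} (hj1 : 1 ≤ j) (hjn : j ≤ n - 1) :
    dd * (2 * bstarF t dd m0 n p q j - bstarF t dd m0 n p q (j-1) - bstarF t dd m0 n p q (j+1))
      + m0 * bstarF t dd m0 n p q j + dd * hstarF t dd m0 n p q * epsF p q j = 1 := by
  have hβ := betaF_rec (t := t) (dd := dd) ht htt hm0 (by omega) hj1 hjn
  have hψ := psiF_rec (t := t) ht htt hdd hq1 hqp hpn hj1 hjn
  unfold bstarF
  linear_combination hβ - dd * hstarF t dd m0 n p q * hψ

/-- the exception-row equation for the candidate. -/
lemma hstarF_eq (ht : 2 < t) (hdd : 0 < dd) (hm0 : 0 < m0)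
    (hq1 : 1 ≤ q) (hqp : q + 2 ≤ p) (hpn : p ≤ n) :
    dd * (bstarF t dd m0 n p q p - bstarF t dd m0 n p q (p-1)
        + bstarF t dd m0 n p q (q-1) - bstarF t dd m0 n p q q)
      + (m0 + 2*dd) * hstarF t dd m0 n p q = 1 := by
  have h2 := Dh_pos (t := t) (dd := dd) (m0 := m0) ht hdd hm0 hq1 hqp hpn
  have hs : hstarF t dd m0 n p q * (m0 + 2*dd - dd^2 * ePsi t dd n p q)
      = 1 - dd * eBeta t m0 n p q := by
    unfold hstarF; exact div_mul_cancel₀ _ (ne_of_gt h2)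
  unfold bstarF
  have hE : betaF t m0 n p - betaF t m0 n (p-1) + betaF t m0 n (q-1) - betaF t m0 n q
      = eBeta t m0 n p q := by unfold eBeta; ring
  have hP : psiF t dd n p q p - psiF t dd n p q (p-1) + psiF t dd n p q (q-1) - psiF t dd n p q q
      = ePsi t dd n p q := by unfold ePsi; ring
  linear_combination hs + dd * hE - dd^2 * hstarF t dd m0 n p q * hP

/-- the key bound: μ b*_j < 1 on the two sections. -/
lemma bstarF_lt (ht : 2 < t) (hdd : 0 < dd) (hm0 : 0 < m0)
    (hq1 : 1 ≤ q) (hqp : q + 2 ≤ p) (hpn : p ≤ n)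
    {j : ℕ} (hj1 : 1 ≤ j) (hjn : j ≤ n - 1) (hsec : j ≤ q - 1 ∨ p ≤ j) :
    m0 * bstarF t dd m0 n p q j < 1 := by
  have hU : 0 < uu t n := uu_pos ht (by omega)
  have hβ : m0 * betaF t m0 n j < 1 := by
    have hj0 : 0 < uu t j := uu_pos ht hj1
    have hnj : 0 < uu t (n-j) := uu_pos ht (by omega)
    have hfrac : 0 < (uu t j + uu t (n-j)) / uu t n := by positivity
    have : m0 * betaF t m0 n j = 1 - (uu t j + uu t (n-j)) / uu t n := by
      unfold betaF; field_simp
    rw [this]; linarith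
  have hψ : 0 ≤ psiF t dd n p q j := by
    rcases hsec with h | h
    · exact psiF_nonneg_left ht hdd hq1 hqp hpn h
    · exact psiF_nonneg_right ht hdd hq1 hqp hpn h
  have hh := hstarF_pos (t := t) (dd := dd) (m0 := m0) ht hdd hm0 hq1 hqp hpn
  unfold bstarF
  have : 0 ≤ dd * hstarF t dd m0 n p q * psiF t dd n p q j := by positivity
  nlinarith


section ROWS
variable {n p q : ℕ} {κs κo κd : ℝ}

/-- candidate dual vector as a function on pairs -/
def astar (p q : ℕ) (b : ℕ → ℝ) (h : ℝ) : ℕ × ℕ → ℝ := fun u =>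
  if u = (p, q) then h else if u = (q, p) then -h
  else if u.2 = u.1 + 1 then b u.1 else if u.1 = u.2 + 1 then -b u.2 else 0

lemma astar_up (hq1 : 1 ≤ q) (hqp : q + 2 ≤ p) (b : ℕ → ℝ) (h : ℝ) (j : ℕ) : astar p q b h (j, j+1) = b j := by
  simp only [astar, Prod.mk.injEq]
  rw [if_neg (by omega), if_neg (by omega)]
  simp

lemma astar_down (hq1 : 1 ≤ q) (hqp : q + 2 ≤ p) (b : ℕ → ℝ) (h : ℝ) (j : ℕ) : astar p q b h (j+1, j) = -b j := by
  simp only [astar, Prod.mk.injEq]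
  rw [if_neg (by omega), if_neg (by omega), if_neg (by omega)]
  simp

lemma astar_pq (b : ℕ → ℝ) (h : ℝ) : astar p q b h (p, q) = h := by
  simp [astar]

lemma astar_qp (hqp : q + 2 ≤ p) (b : ℕ → ℝ) (h : ℝ) : astar p q b h (q, p) = -h := by
  simp only [astar, Prod.mk.injEq]
  rw [if_neg (by omega)]
  simp

/-- splitting a sum over the training set -/
lemma sum_T (hq1 : 1 ≤ q) (hqp : q + 2 ≤ p) (f : ℕ × ℕ → ℝ) :
    ∑ u ∈ T n p q, f u
      = (∑ j ∈ Finset.Icc 1 (n-1), f (j, j+1)) + (∑ j ∈ Finset.Icc 1 (n-1), f (j+1, j))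
        + f (p, q) + f (q, p) := by
  have hD1 : Disjoint ((Finset.Icc 1 (n-1)).image fun j => (j, j+1))
      ((Finset.Icc 1 (n-1)).image fun j => (j+1, j)) := by
    rw [Finset.disjoint_left]
    intro a ha hb
    simp only [Finset.mem_image, Finset.mem_Icc, Prod.ext_iff] at ha hb
    obtain ⟨x, hx, hx1, hx2⟩ := ha
    obtain ⟨y, hy, hy1, hy2⟩ := hb
    omega
  have hD2 : Disjoint
      (((Finset.Icc 1 (n-1)).image fun j => (j, j+1)) ∪
        ((Finset.Icc 1 (n-1)).image fun j => (j+1, j)))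
      ({(p, q), (q, p)} : Finset (ℕ × ℕ)) := by
    rw [Finset.disjoint_left]
    intro a ha hb
    simp only [Finset.mem_union, Finset.mem_image, Finset.mem_Icc, Prod.ext_iff,
      Finset.mem_insert, Finset.mem_singleton] at ha hb
    rcases ha with ⟨x, hx, hx1, hx2⟩ | ⟨x, hx, hx1, hx2⟩ <;> rcases hb with ⟨h1, h2⟩ | ⟨h1, h2⟩ <;>
      omega
  have hne : ((p, q) : ℕ × ℕ) ≠ (q, p) := by
    intro hcon; simp only [Prod.mk.injEq] at hcon; omega
  rw [T, Finset.sum_union hD2, Finset.sum_union hD1,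
    Finset.sum_image (by intro x _ y _ hxy; simpa using hxy),
    Finset.sum_image (by intro x _ y _ hxy; simp only [Prod.mk.injEq] at hxy; omega),
    Finset.sum_pair hne]
  ring

/-- total sum of the candidate dual over T is 0 -/
lemma sum_astar (hq1 : 1 ≤ q) (hqp : q + 2 ≤ p) (b : ℕ → ℝ) (h : ℝ) :
    ∑ u ∈ T n p q, astar p q b h u = 0 := by
  rw [sum_T hq1 hqp]
  rw [astar_pq, astar_qp hqp]
  rw [Finset.sum_congr rfl (fun j _ => astar_up hq1 hqp b h j),
    Finset.sum_congr rfl (fun j _ => astar_down hq1 hqp b h j)]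
  rw [Finset.sum_neg_distrib]
  ring

/-- fiber sum over first coordinates -/
lemma sum_fiber1 (hq1 : 1 ≤ q) (hqp : q + 2 ≤ p) (hpn : p ≤ n) (b : ℕ → ℝ) (h : ℝ) (hb0 : b 0 = 0) (hbn : b n = 0) {i : ℕ} (hi : i ≤ n) :
    ∑ u' ∈ T n p q, (if i = u'.1 then astar p q b h u' else 0)
      = b i - b (i-1) + h * ((if i = p then 1 else 0) - (if i = q then 1 else 0)) := by
  rw [sum_T hq1 hqp]
  dsimp only
  rw [astar_pq, astar_qp hqp]
  have p1 : (∑ j ∈ Finset.Icc 1 (n-1), if i = j then astar p q b h (j, j+1) else 0)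
      = (if 1 ≤ i ∧ i ≤ n-1 then b i else 0) := by
    rw [Finset.sum_congr rfl (fun j _ => by rw [astar_up hq1 hqp b h j]),
      Finset.sum_ite_eq (Finset.Icc 1 (n-1)) i b]
    simp only [Finset.mem_Icc]
  have p2 : (∑ j ∈ Finset.Icc 1 (n-1), if i = j + 1 then astar p q b h (j+1, j) else 0)
      = (if 2 ≤ i ∧ i ≤ n then -b (i-1) else 0) := by
    by_cases hi2 : 2 ≤ i
    · have e : ∀ j ∈ Finset.Icc 1 (n-1),
          (if i = j + 1 then astar p q b h (j+1, j) else 0) = (if i - 1 = j then -b j else 0) :=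
        fun j hj => by rw [astar_down hq1 hqp b h j]; exact if_congr (by omega) rfl rfl
      rw [Finset.sum_congr rfl e, Finset.sum_ite_eq (Finset.Icc 1 (n-1)) (i-1) (fun j => -b j)]
      simp only [Finset.mem_Icc]
      exact if_congr (by omega) rfl rfl
    · have e : ∀ j ∈ Finset.Icc 1 (n-1),
          (if i = j + 1 then astar p q b h (j+1, j) else 0) = 0 :=
        fun j hj => by rw [if_neg (by simp only [Finset.mem_Icc] at hj; omega)]
      rw [Finset.sum_congr rfl e, Finset.sum_const_zero, if_neg (by omega)]
  rw [p1, p2]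
  have v1 : (if 1 ≤ i ∧ i ≤ n-1 then b i else 0) = b i := by
    split_ifs with hc
    · rfl
    · rcases (show i = 0 ∨ i = n by omega) with rfl | rfl
      · exact hb0.symm
      · exact hbn.symm
  have v2 : (if 2 ≤ i ∧ i ≤ n then -b (i-1) else 0) = -b (i-1) := by
    split_ifs with hc
    · rfl
    · have h0 : i - 1 = 0 := by omega
      rw [h0, hb0]; ring
  rw [v1, v2]
  split_ifs <;> first | (exfalso; omega) | ring

/-- fiber sum over second coordinates -/
lemma sum_fiber2 (hq1 : 1 ≤ q) (hqp : q + 2 ≤ p) (hpn : p ≤ n) (b : ℕ → ℝ) (h : ℝ)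
    (hb0 : b 0 = 0) (hbn : b n = 0) {k : ℕ} (hk : k ≤ n) :
    ∑ u' ∈ T n p q, (if k = u'.2 then astar p q b h u' else 0)
      = b (k-1) - b k + h * ((if k = q then 1 else 0) - (if k = p then 1 else 0)) := by
  rw [sum_T hq1 hqp]
  dsimp only
  rw [astar_pq, astar_qp hqp]
  have p1 : (∑ j ∈ Finset.Icc 1 (n-1), if k = j + 1 then astar p q b h (j, j+1) else 0)
      = (if 2 ≤ k ∧ k ≤ n then b (k-1) else 0) := by
    by_cases hk2 : 2 ≤ k
    · have e : ∀ j ∈ Finset.Icc 1 (n-1),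
          (if k = j + 1 then astar p q b h (j, j+1) else 0) = (if k - 1 = j then b j else 0) :=
        fun j hj => by rw [astar_up hq1 hqp b h j]; exact if_congr (by omega) rfl rfl
      rw [Finset.sum_congr rfl e, Finset.sum_ite_eq (Finset.Icc 1 (n-1)) (k-1) b]
      simp only [Finset.mem_Icc]
      exact if_congr (by omega) rfl rfl
    · have e : ∀ j ∈ Finset.Icc 1 (n-1),
          (if k = j + 1 then astar p q b h (j, j+1) else 0) = 0 :=
        fun j hj => by rw [if_neg (by simp only [Finset.mem_Icc] at hj; omega)]
      rw [Finset.sum_congr rfl e, Finset.sum_const_zero, if_neg (by omega)]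
  have p2 : (∑ j ∈ Finset.Icc 1 (n-1), if k = j then astar p q b h (j+1, j) else 0)
      = (if 1 ≤ k ∧ k ≤ n-1 then -b k else 0) := by
    rw [Finset.sum_congr rfl (fun j _ => by rw [astar_down hq1 hqp b h j]),
      Finset.sum_ite_eq (Finset.Icc 1 (n-1)) k (fun j => -b j)]
    simp only [Finset.mem_Icc]
  rw [p1, p2]
  have v1 : (if 2 ≤ k ∧ k ≤ n then b (k-1) else 0) = b (k-1) := by
    split_ifs with hc
    · rfl
    · have h0 : k - 1 = 0 := by omega
      rw [h0, hb0]
  have v2 : (if 1 ≤ k ∧ k ≤ n-1 then -b k else 0) = -b k := by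
    split_ifs with hc
    · rfl
    · rcases (show k = 0 ∨ k = n by omega) with rfl | rfl
      · rw [hb0]; ring
      · rw [hbn]; ring
  rw [v1, v2]
  split_ifs <;> first | (exfalso; omega) | ring

/-- kernel decomposition -/
lemma ker_decomp (κs κo κd : ℝ) (u u' : ℕ × ℕ) :
    ker κs κo κd u u' = κd
      + (κo - κd) * ((if u.1 = u'.1 then (1:ℝ) else 0) + (if u.2 = u'.2 then (1:ℝ) else 0))
      + (κs - 2*κo + κd) * (if u = u' then (1:ℝ) else 0) := by
  unfold ker
  by_cases h1 : u.1 = u'.1 <;> by_cases h2 : u.2 = u'.2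
  · have he : u = u' := Prod.ext h1 h2
    rw [if_pos he, if_pos h1, if_pos h2, if_pos he]; ring
  · have he : u ≠ u' := fun hc => h2 (by rw [hc])
    rw [if_neg he, if_pos (Or.inl h1), if_pos h1, if_neg h2, if_neg he]; ring
  · have he : u ≠ u' := fun hc => h1 (by rw [hc])
    rw [if_neg he, if_pos (Or.inr h2), if_neg h1, if_pos h2, if_neg he]; ring
  · have he : u ≠ u' := fun hc => h1 (by rw [hc])
    rw [if_neg he, if_neg (by tauto), if_neg h1, if_neg h2, if_neg he]; ring

/-- the master row computation -/
lemma sum_ker_astar (hq1 : 1 ≤ q) (hqp : q + 2 ≤ p) (hpn : p ≤ n) (b : ℕ → ℝ) (h : ℝ)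
    (hb0 : b 0 = 0) (hbn : b n = 0) (u : ℕ × ℕ) (h1 : u.1 ≤ n) (h2 : u.2 ≤ n) :
    ∑ u' ∈ T n p q, ker κs κo κd u u' * astar p q b h u'
      = (κo - κd) * ((b u.1 - b (u.1-1) + h * ((if u.1 = p then 1 else 0) - (if u.1 = q then 1 else 0)))
          + (b (u.2-1) - b u.2 + h * ((if u.2 = q then 1 else 0) - (if u.2 = p then 1 else 0))))
        + (κs - 2*κo + κd) * (if u ∈ T n p q then astar p q b h u else 0) := by
  have step : ∀ u' ∈ T n p q, ker κs κo κd u u' * astar p q b h u'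
      = κd * astar p q b h u'
        + (κo - κd) * (if u.1 = u'.1 then astar p q b h u' else 0)
        + (κo - κd) * (if u.2 = u'.2 then astar p q b h u' else 0)
        + (κs - 2*κo + κd) * (if u = u' then astar p q b h u' else 0) := by
    intro u' _
    rw [ker_decomp]
    split_ifs <;> ring
  rw [Finset.sum_congr rfl step]
  rw [Finset.sum_add_distrib, Finset.sum_add_distrib, Finset.sum_add_distrib,
    ← Finset.mul_sum, ← Finset.mul_sum, ← Finset.mul_sum, ← Finset.mul_sum]
  rw [sum_astar hq1 hqp, sum_fiber1 hq1 hqp hpn b h hb0 hbn h1,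
    sum_fiber2 hq1 hqp hpn b h hb0 hbn h2]
  rw [Finset.sum_ite_eq (T n p q) u (astar p q b h)]
  ring


lemma mem_T_iff {n p q : ℕ} {u : ℕ × ℕ} :
    u ∈ T n p q ↔ (1 ≤ u.1 ∧ u.1 ≤ n-1 ∧ u.2 = u.1 + 1)
      ∨ (1 ≤ u.2 ∧ u.2 ≤ n-1 ∧ u.1 = u.2 + 1) ∨ u = (p, q) ∨ u = (q, p) := by
  obtain ⟨a, b⟩ := u
  unfold T
  simp only [Finset.mem_union, Finset.mem_image, Finset.mem_Icc, Finset.mem_insert,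
    Finset.mem_singleton, Prod.mk.injEq]
  constructor
  · rintro ((⟨j, hj, hj1, hj2⟩ | ⟨j, hj, hj1, hj2⟩) | h | h)
    · exact Or.inl (by omega)
    · exact Or.inr (Or.inl (by omega))
    · exact Or.inr (Or.inr (Or.inl h))
    · exact Or.inr (Or.inr (Or.inr h))
  · rintro (⟨h1, h2, h3⟩ | ⟨h1, h2, h3⟩ | h | h)
    · exact Or.inl (Or.inl ⟨a, by omega⟩)
    · exact Or.inl (Or.inr ⟨b, by omega⟩)
    · exact Or.inr (Or.inl h)
    · exact Or.inr (Or.inr h)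

lemma pq_mem_T {n p q : ℕ} : (p, q) ∈ T n p q := mem_T_iff.mpr (Or.inr (Or.inr (Or.inl rfl)))
lemma qp_mem_T {n p q : ℕ} : (q, p) ∈ T n p q := mem_T_iff.mpr (Or.inr (Or.inr (Or.inr rfl)))

lemma up_mem_T {n p q j : ℕ} (h1 : 1 ≤ j) (h2 : j ≤ n-1) : (j, j+1) ∈ T n p q :=
  mem_T_iff.mpr (Or.inl ⟨h1, h2, rfl⟩)

lemma up_mem_T_iff {n p q j : ℕ} (hq1 : 1 ≤ q) (hqp : q + 2 ≤ p) :
    (j, j+1) ∈ T n p q ↔ (1 ≤ j ∧ j ≤ n-1) := by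
  rw [mem_T_iff]
  simp only [Prod.mk.injEq, and_true, true_and]
  omega

lemma memT_le {n p q : ℕ} (hq1 : 1 ≤ q) (hqp : q + 2 ≤ p) (hpn : p ≤ n) {u : ℕ × ℕ}
    (hu : u ∈ T n p q) : u.1 ≤ n ∧ u.2 ≤ n := by
  rcases mem_T_iff.mp hu with ⟨h1, h2, h3⟩ | ⟨h1, h2, h3⟩ | h | h
  · omega
  · omega
  · rw [h]; exact ⟨show p ≤ n from hpn, show q ≤ n by omega⟩
  · rw [h]; exact ⟨show q ≤ n by omega, show p ≤ n from hpn⟩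

section LAB
variable {n p q : ℕ}

lemma lab_up (hq1 : 1 ≤ q) (hqp : q + 2 ≤ p) (j : ℕ) : lab p q (j, j+1) = 1 := by
  unfold lab
  simp only [Prod.mk.injEq]
  rw [if_neg (by omega), if_neg (by omega), if_pos (by omega)]

lemma lab_down (hq1 : 1 ≤ q) (hqp : q + 2 ≤ p) (j : ℕ) : lab p q (j+1, j) = -1 := by
  unfold lab
  simp only [Prod.mk.injEq]
  rw [if_neg (by omega), if_neg (by omega), if_neg (by omega)]

lemma lab_pq : lab p q (p, q) = 1 := by unfold lab; rw [if_pos rfl]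

lemma lab_qp (hqp : q + 2 ≤ p) : lab p q (q, p) = -1 := by
  unfold lab
  simp only [Prod.mk.injEq]
  rw [if_neg (by omega), if_pos (by simp)]

end LAB

/-- the full row verification for the candidate -/
lemma row_main {n p q : ℕ} {κs κo κd cinv : ℝ} (hq1 : 1 ≤ q) (hqp : q + 2 ≤ p) (hpn : p ≤ n)
    (b : ℕ → ℝ) (h : ℝ) (hb0 : b 0 = 0) (hbn : b n = 0)
    (hL : ∀ j, 1 ≤ j → j ≤ n-1 →
      (κs - κd) * b j - (κo - κd) * (b (j-1) + b (j+1)) + cinv * b j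
        + (κo - κd) * h * epsF p q j = 1)
    (hH : (κo - κd) * (b p - b (p-1) + b (q-1) - b q) + (κs - κd + cinv) * h = 1) :
    ∀ u ∈ T n p q,
      (∑ u' ∈ T n p q, ker κs κo κd u u' * astar p q b h u') + cinv * astar p q b h u
        = lab p q u := by
  intro u hu
  have hle := memT_le hq1 hqp hpn hu
  rw [sum_ker_astar hq1 hqp hpn b h hb0 hbn u hle.1 hle.2, if_pos hu]
  rcases mem_T_iff.mp hu with ⟨h1, h2, h3⟩ | ⟨h1, h2, h3⟩ | hh | hh
  · -- up pair
    obtain ⟨i, k⟩ := u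
    dsimp only at h1 h2 h3 ⊢
    subst h3
    simp only [Nat.add_sub_cancel]
    rw [astar_up hq1 hqp, lab_up hq1 hqp]
    have hLi := hL i h1 h2
    unfold epsF at hLi
    split_ifs at hLi ⊢ <;> first | (exfalso; omega) | linear_combination hLi
  · -- down pair
    obtain ⟨k, i⟩ := u
    dsimp only at h1 h2 h3 ⊢
    subst h3
    simp only [Nat.add_sub_cancel]
    rw [astar_down hq1 hqp, lab_down hq1 hqp]
    have hLi := hL i h1 h2
    unfold epsF at hLi
    split_ifs at hLi ⊢ <;> first | (exfalso; omega) | linear_combination -hLi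
  · subst hh
    rw [astar_pq, lab_pq]
    dsimp only
    rw [if_pos rfl, if_neg (by omega), if_pos rfl, if_neg (by omega)]
    linear_combination hH
  · subst hh
    rw [astar_qp hqp, lab_qp hqp]
    dsimp only
    rw [if_neg (by omega), if_pos rfl, if_neg (by omega), if_pos rfl]
    linear_combination -hH

/-- prediction row for an off-training pair -/
lemma pred_sum {n p q : ℕ} {κs κo κd : ℝ} (hq1 : 1 ≤ q) (hqp : q + 2 ≤ p) (hpn : p ≤ n)
    (b : ℕ → ℝ) (h : ℝ) (hb0 : b 0 = 0) (hbn : b n = 0)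
    {j k : ℕ} (hj1 : j ≤ n) (hkn : k ≤ n) (hnt : (j, k) ∉ T n p q) :
    ∑ u' ∈ T n p q, ker κs κo κd (j, k) u' * astar p q b h u'
      = ((κo - κd) * (b j - b (j-1)) + (κo - κd) * h * ((if j = p then 1 else 0) - (if j = q then 1 else 0)))
        - ((κo - κd) * (b k - b (k-1)) + (κo - κd) * h * ((if k = p then 1 else 0) - (if k = q then 1 else 0))) := by
  rw [sum_ker_astar hq1 hqp hpn b h hb0 hbn (j, k) hj1 hkn, if_neg hnt]
  ring

end ROWS

section MAT
variable {n p q : ℕ} {κs κo κd c : ℝ}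

lemma fiber_sq_nonneg {ι : Type*} [Fintype ι] [DecidableEq ι] (g : ι → ℕ) (x : ι → ℝ) :
    0 ≤ ∑ u : ι, ∑ u' : ι, x u * x u' * (if g u = g u' then 1 else 0) := by
  have key : ∑ u : ι, ∑ u' : ι, x u * x u' * (if g u = g u' then 1 else 0)
      = ∑ i ∈ Finset.image g Finset.univ,
          (∑ u ∈ Finset.univ.filter (fun u => g u = i), x u)^2 := by
    rw [← Finset.sum_fiberwise_of_maps_to
      (fun u _ => Finset.mem_image_of_mem g (Finset.mem_univ u))
      (fun u => ∑ u' : ι, x u * x u' * (if g u = g u' then 1 else 0))]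
    apply Finset.sum_congr rfl
    intro i _
    have inner : ∀ u ∈ Finset.univ.filter (fun u => g u = i),
        (∑ u' : ι, x u * x u' * (if g u = g u' then 1 else 0))
          = x u * ∑ u' ∈ Finset.univ.filter (fun u' => g u' = i), x u' := by
      intro u hu
      simp only [Finset.mem_filter, Finset.mem_univ, true_and] at hu
      rw [Finset.sum_filter, Finset.mul_sum]
      apply Finset.sum_congr rfl
      intro u' _
      by_cases hgu : g u' = i
      · rw [if_pos hgu, if_pos (by rw [hu, hgu])]; ring
      · rw [if_neg hgu, if_neg (by rw [hu]; exact fun hc => hgu hc.symm)]; ring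
    rw [Finset.sum_congr rfl inner, ← Finset.sum_mul]
    ring
  rw [key]
  exact Finset.sum_nonneg (fun i _ => sq_nonneg _)

lemma quad_pos (hκd : 0 ≤ κd) (hκo : κd < κo) (hκs : 2 * (κo - κd) ≤ κs - κd) (hc : 0 < c)
    (x : ↥(T n p q) → ℝ) (hx : x ≠ 0) :
    0 < x ⬝ᵥ ((Kmat n p q κs κo κd + c⁻¹ • (1 : Matrix ↥(T n p q) ↥(T n p q) ℝ)) *ᵥ x) := by
  have hsum : x ⬝ᵥ ((Kmat n p q κs κo κd + c⁻¹ • (1 : Matrix ↥(T n p q) ↥(T n p q) ℝ)) *ᵥ x)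
      = (∑ u : ↥(T n p q), ∑ u' : ↥(T n p q), x u * x u' * ker κs κo κd u.1 u'.1)
        + c⁻¹ * ∑ u : ↥(T n p q), x u * x u := by
    rw [Matrix.add_mulVec, dotProduct_add, Matrix.smul_mulVec, Matrix.one_mulVec]
    congr 1
    · simp only [dotProduct, Matrix.mulVec, Kmat, Finset.mul_sum]
      apply Finset.sum_congr rfl; intro u _
      apply Finset.sum_congr rfl; intro u' _
      ring
    · simp only [dotProduct, Pi.smul_apply, smul_eq_mul, Finset.mul_sum]
      apply Finset.sum_congr rfl; intro u _
      ring
  have pt : ∀ u u' : ↥(T n p q), x u * x u' * ker κs κo κd u.1 u'.1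
      = κd * (x u * x u')
        + (κo - κd) * (x u * x u' * (if (u:ℕ×ℕ).1 = (u':ℕ×ℕ).1 then 1 else 0))
        + (κo - κd) * (x u * x u' * (if (u:ℕ×ℕ).2 = (u':ℕ×ℕ).2 then 1 else 0))
        + (κs - 2*κo + κd) * (x u * x u' * (if u = u' then 1 else 0)) := by
    intro u u'
    rw [ker_decomp]
    have he : ((u:ℕ×ℕ) = (u':ℕ×ℕ)) ↔ (u = u') := Subtype.coe_inj
    by_cases h : u = u'
    · rw [if_pos (he.mpr h), if_pos h]; ring
    · rw [if_neg (fun hc => h (he.mp hc)), if_neg h]; ring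
  have hker : ∑ u : ↥(T n p q), ∑ u' : ↥(T n p q), x u * x u' * ker κs κo κd u.1 u'.1
      = κd * ((∑ u : ↥(T n p q), x u) * (∑ u : ↥(T n p q), x u))
        + (κo - κd) * (∑ u : ↥(T n p q), ∑ u' : ↥(T n p q),
            x u * x u' * (if (u:ℕ×ℕ).1 = (u':ℕ×ℕ).1 then 1 else 0))
        + (κo - κd) * (∑ u : ↥(T n p q), ∑ u' : ↥(T n p q),
            x u * x u' * (if (u:ℕ×ℕ).2 = (u':ℕ×ℕ).2 then 1 else 0))
        + (κs - 2*κo + κd) * (∑ u : ↥(T n p q), x u * x u) := by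
    rw [Finset.sum_congr rfl (fun u _ => Finset.sum_congr rfl (fun u' _ => pt u u'))]
    have sp : ∀ u : ↥(T n p q), ∑ u' : ↥(T n p q),
        (κd * (x u * x u')
          + (κo - κd) * (x u * x u' * (if (u:ℕ×ℕ).1 = (u':ℕ×ℕ).1 then 1 else 0))
          + (κo - κd) * (x u * x u' * (if (u:ℕ×ℕ).2 = (u':ℕ×ℕ).2 then 1 else 0))
          + (κs - 2*κo + κd) * (x u * x u' * (if u = u' then 1 else 0)))
        = κd * (x u * ∑ u' : ↥(T n p q), x u')
          + (κo - κd) * (∑ u' : ↥(T n p q), x u * x u' * (if (u:ℕ×ℕ).1 = (u':ℕ×ℕ).1 then 1 else 0))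
          + (κo - κd) * (∑ u' : ↥(T n p q), x u * x u' * (if (u:ℕ×ℕ).2 = (u':ℕ×ℕ).2 then 1 else 0))
          + (κs - 2*κo + κd) * (x u * x u) := by
      intro u
      rw [Finset.sum_add_distrib, Finset.sum_add_distrib, Finset.sum_add_distrib]
      congr 1
      · congr 1
        · congr 1
          · rw [← Finset.mul_sum, ← Finset.mul_sum]
          · rw [← Finset.mul_sum]
        · rw [← Finset.mul_sum]
      · rw [← Finset.mul_sum]
        congr 1
        have : ∀ u' : ↥(T n p q), x u * x u' * (if u = u' then (1:ℝ) else 0)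
            = if u = u' then x u * x u' else 0 := by
          intro u'; split_ifs <;> ring
        rw [Finset.sum_congr rfl (fun u' _ => this u')]
        rw [Finset.sum_ite_eq Finset.univ u (fun u' => x u * x u'), if_pos (Finset.mem_univ u)]
    rw [Finset.sum_congr rfl (fun u _ => sp u)]
    rw [Finset.sum_add_distrib, Finset.sum_add_distrib, Finset.sum_add_distrib,
      ← Finset.mul_sum, ← Finset.mul_sum, ← Finset.mul_sum, ← Finset.mul_sum, ← Finset.sum_mul]
    try ring
  have A1 := fiber_sq_nonneg (fun u : ↥(T n p q) => (u:ℕ×ℕ).1) x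
  have A2 := fiber_sq_nonneg (fun u : ↥(T n p q) => (u:ℕ×ℕ).2) x
  have S0 : 0 ≤ (∑ u : ↥(T n p q), x u) * (∑ u : ↥(T n p q), x u) := mul_self_nonneg _
  have Sq : 0 < ∑ u : ↥(T n p q), x u * x u := by
    have hne : ∃ u, x u ≠ 0 := by
      by_contra hno; push_neg at hno; exact hx (funext hno)
    obtain ⟨u0, hu0⟩ := hne
    exact Finset.sum_pos' (fun u _ => mul_self_nonneg _)
      ⟨u0, Finset.mem_univ u0, mul_self_pos.mpr hu0⟩
  rw [hsum, hker]
  have hγ : 0 ≤ κs - 2*κo + κd := by linarith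
  have hci : 0 < c⁻¹ := by positivity
  have t1 : 0 ≤ κd * ((∑ u : ↥(T n p q), x u) * (∑ u : ↥(T n p q), x u)) := mul_nonneg hκd S0
  have t2 : 0 ≤ (κo - κd) * (∑ u : ↥(T n p q), ∑ u' : ↥(T n p q),
      x u * x u' * (if (u:ℕ×ℕ).1 = (u':ℕ×ℕ).1 then 1 else 0)) :=
    mul_nonneg (by linarith) A1
  have t3 : 0 ≤ (κo - κd) * (∑ u : ↥(T n p q), ∑ u' : ↥(T n p q),
      x u * x u' * (if (u:ℕ×ℕ).2 = (u':ℕ×ℕ).2 then 1 else 0)) :=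
    mul_nonneg (by linarith) A2
  have t4 : 0 ≤ (κs - 2*κo + κd) * (∑ u : ↥(T n p q), x u * x u) :=
    mul_nonneg hγ (le_of_lt Sq)
  nlinarith [mul_pos hci Sq]

lemma M_isUnit (hκd : 0 ≤ κd) (hκo : κd < κo) (hκs : 2 * (κo - κd) ≤ κs - κd) (hc : 0 < c) :
    IsUnit (Kmat n p q κs κo κd + c⁻¹ • (1 : Matrix ↥(T n p q) ↥(T n p q) ℝ)).det := by
  rw [isUnit_iff_ne_zero]
  intro hdet
  obtain ⟨v, hv0, hv⟩ := (Matrix.exists_mulVec_eq_zero_iff).mpr hdet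
  have := quad_pos hκd hκo hκs hc v hv0
  rw [hv] at this
  simp at this

/-- identification of the dual vector with the candidate -/
lemma dual_eq (hq1 : 1 ≤ q) (hqp : q + 2 ≤ p) (hpn : p ≤ n)
    (hκd : 0 ≤ κd) (hκo : κd < κo) (hκs : 2 * (κo - κd) ≤ κs - κd) (hc : 0 < c)
    (b : ℕ → ℝ) (h : ℝ) (hb0 : b 0 = 0) (hbn : b n = 0)
    (hL : ∀ j, 1 ≤ j → j ≤ n-1 →
      (κs - κd) * b j - (κo - κd) * (b (j-1) + b (j+1)) + c⁻¹ * b j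
        + (κo - κd) * h * epsF p q j = 1)
    (hH : (κo - κd) * (b p - b (p-1) + b (q-1) - b q) + (κs - κd + c⁻¹) * h = 1) :
    dual n p q κs κo κd c = fun u => astar p q b h u.1 := by
  set M := Kmat n p q κs κo κd + c⁻¹ • (1 : Matrix ↥(T n p q) ↥(T n p q) ℝ) with hM
  have hunit : IsUnit M.det := M_isUnit hκd hκo hκs hc
  have hrow := row_main hq1 hqp hpn b h hb0 hbn hL hH
  have hMv : M *ᵥ (fun u : ↥(T n p q) => astar p q b h u.1) = fun u => lab p q u.1 := by
    funext u
    have expand : (M *ᵥ (fun u : ↥(T n p q) => astar p q b h u.1)) u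
        = (∑ u' ∈ T n p q, ker κs κo κd u.1 u' * astar p q b h u') + c⁻¹ * astar p q b h u.1 := by
      rw [hM, Matrix.add_mulVec, Matrix.smul_mulVec, Matrix.one_mulVec]
      simp only [Pi.add_apply, Pi.smul_apply, smul_eq_mul]
      congr 1
      rw [Matrix.mulVec, dotProduct]
      rw [← Finset.sum_attach (T n p q) (fun v => ker κs κo κd u.1 v * astar p q b h v)]
      rfl
    rw [expand, hrow u.1 u.2]
  have : dual n p q κs κo κd c = M⁻¹ *ᵥ (fun u => lab p q u.1) := rfl
  rw [this, ← hMv, Matrix.mulVec_mulVec, Matrix.nonsing_inv_mul M hunit, Matrix.one_mulVec]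

end MAT


section FINAL

lemma Lconv {dd m0 κs κo κd cinv X Y Z W E : ℝ} (hdd : dd = κo - κd)
    (hm0 : m0 = κs - 2*κo + κd + cinv)
    (hthis : dd*(2*X - Y - Z) + m0*X + dd*W*E = 1) :
    (κs - κd)*X - (κo - κd)*(Y + Z) + cinv*X + (κo - κd)*W*E = 1 := by
  subst hdd hm0; linear_combination hthis

lemma Hconv {dd m0 κs κo κd cinv P P1 Q1 Q W : ℝ} (hdd : dd = κo - κd)
    (hm0 : m0 = κs - 2*κo + κd + cinv)
    (hthis : dd*(P - P1 + Q1 - Q) + (m0 + 2*dd)*W = 1) :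
    (κo - κd)*(P - P1 + Q1 - Q) + (κs - κd + cinv)*W = 1 := by
  subst hdd hm0; linear_combination hthis

set_option maxHeartbeats 1000000 in
/-- The emergent ranks are strictly decreasing within each transitive section;
consequently within-section transitive generalization succeeds. -/
theorem within_section_generalization
    (n p q : ℕ) (κs κo κd c : ℝ)
    (hn : 3 ≤ n) (hq1 : 1 ≤ q) (hqp : q < p) (hpn : p ≤ n) (hgap : 2 ≤ p - q)
    (hκd : 0 ≤ κd) (hκo : κd < κo) (hκs : 2 * (κo - κd) ≤ κs - κd) (hc : 0 < c) :
    (∀ j j' : ℕ, 1 ≤ j → j < j' → j' ≤ q →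
        rank n p q κs κo κd c j' < rank n p q κs κo κd c j) ∧
    (∀ j j' : ℕ, p ≤ j → j < j' → j' ≤ n →
        rank n p q κs κo κd c j' < rank n p q κs κo κd c j) ∧
    (∀ j k : ℕ, (j, k) ∉ T n p q → j < k →
      ((1 ≤ j ∧ k ≤ q) ∨ (p ≤ j ∧ k ≤ n)) →
        0 < pred n p q κs κo κd c (j, k)) := by
  have hqp' : q + 2 ≤ p := by omega
  set dd : ℝ := κo - κd with hdd_def
  set m0 : ℝ := κs - 2*κo + κd + c⁻¹ with hm0_def
  have hdd : 0 < dd := by rw [hdd_def]; linarith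
  have hci : 0 < c⁻¹ := by positivity
  have hm0 : 0 < m0 := by rw [hm0_def]; linarith
  set t : ℝ := 2 + m0/dd with ht_def
  have ht : 2 < t := by
    rw [ht_def]
    have : 0 < m0/dd := div_pos hm0 hdd
    linarith
  have htt : dd * t = 2*dd + m0 := by
    rw [ht_def]
    field_simp
  set b : ℕ → ℝ := bstarF t dd m0 n p q with hbdef
  set hh : ℝ := hstarF t dd m0 n p q with hhdef
  have hU : uu t n ≠ 0 := ne_of_gt (uu_pos ht (by omega))
  have hb0 : b 0 = 0 := bstarF_zero (ne_of_gt hm0) hU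
  have hbn : b n = 0 := bstarF_n (ne_of_gt hm0) hU hq1 hqp' hpn
  have hL : ∀ j, 1 ≤ j → j ≤ n-1 →
      (κs - κd) * b j - (κo - κd) * (b (j-1) + b (j+1)) + c⁻¹ * b j
        + (κo - κd) * hh * epsF p q j = 1 := by
    intro j h1 h2
    exact Lconv hdd_def hm0_def (bstarF_L ht htt hdd hm0 hq1 hqp' hpn h1 h2)
  have hH : (κo - κd) * (b p - b (p-1) + b (q-1) - b q) + (κs - κd + c⁻¹) * hh = 1 :=
    Hconv hdd_def hm0_def (hstarF_eq ht hdd hm0 hq1 hqp' hpn)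
  have key : dual n p q κs κo κd c = fun u => astar p q b hh u.1 :=
    dual_eq hq1 hqp' hpn hκd hκo hκs hc b hh hb0 hbn hL hH
  -- identification of bbar and hbar
  have hbbar : ∀ j, j ≤ n → bbar n p q κs κo κd c j = b j := by
    intro j hj
    unfold bbar aAt
    by_cases hmem : (j, j+1) ∈ T n p q
    · rw [dif_pos hmem, key]
      exact astar_up hq1 hqp' b hh j
    · rw [dif_neg hmem]
      have hrange := (up_mem_T_iff (n := n) hq1 hqp').not.mp hmem
      rcases (show j = 0 ∨ j = n by omega) with rfl | rfl
      · exact hb0.symm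
      · exact hbn.symm
  have hhbar : hbar n p q κs κo κd c = hh := by
    unfold hbar aAt
    rw [dif_pos pq_mem_T, key]
    exact astar_pq b hh
  have hrank : ∀ j, 1 ≤ j → j ≤ n → rank n p q κs κo κd c j
      = (κo - κd)*(b j - b (j-1))
        + (κo - κd)*hh*((if j = p then 1 else 0) - (if j = q then 1 else 0)) := by
    intro j h1 h2
    unfold rank
    rw [hbbar j h2, hbbar (j-1) (by omega), hhbar]
  -- consecutive strict decrease on the sections
  have hstep : ∀ j, 1 ≤ j → (j + 1 ≤ q ∨ (p ≤ j ∧ j ≤ n-1)) →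
      rank n p q κs κo κd c (j+1) < rank n p q κs κo κd c j := by
    intro j h1 hsec
    have hj2 : j ≤ n - 1 := by omega
    rw [hrank j h1 (by omega), hrank (j+1) (by omega) (by omega)]
    have hLj := bstarF_L ht htt hdd hm0 hq1 hqp' hpn h1 hj2
    have hblt := bstarF_lt ht hdd hm0 hq1 hqp' hpn h1 hj2 (by omega)
    rw [← hbdef, ← hhdef] at hLj
    rw [← hbdef] at hblt
    unfold epsF at hLj
    simp only [Nat.add_sub_cancel]
    rw [← hdd_def]
    rcases hsec with hsc | hsc
    · rw [if_neg (show ¬(j+1 = p) by omega), if_neg (show ¬(j = p) by omega),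
        if_neg (show ¬(j = q) by omega)]
      rw [if_neg (show ¬(j = p) by omega), if_neg (show ¬(j = q) by omega),
        if_neg (show ¬(j+1 = p) by omega)] at hLj
      linarith [hLj, hblt]
    · rw [if_neg (show ¬(j+1 = p) by omega), if_neg (show ¬(j+1 = q) by omega),
        if_neg (show ¬(j = q) by omega)]
      rw [if_neg (show ¬(j = q) by omega), if_neg (show ¬(j+1 = q) by omega),
        if_neg (show ¬(j+1 = p) by omega)] at hLj
      linarith [hLj, hblt]
  -- monotone extension
  have part1 : ∀ j j' : ℕ, 1 ≤ j → j < j' → j' ≤ q →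
      rank n p q κs κo κd c j' < rank n p q κs κo κd c j := by
    intro j j' h1 h2 h3
    induction j' with
    | zero => omega
    | succ k ih =>
      rcases (show j = k ∨ j < k by omega) with rfl | hlt
      · exact hstep j h1 (Or.inl h3)
      · exact lt_trans (hstep k (by omega) (Or.inl h3)) (ih hlt (by omega))
  have part2 : ∀ j j' : ℕ, p ≤ j → j < j' → j' ≤ n →
      rank n p q κs κo κd c j' < rank n p q κs κo κd c j := by
    intro j j' h1 h2 h3
    induction j' with
    | zero => omega
    | succ k ih =>
      rcases (show j = k ∨ j < k by omega) with rfl | hlt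
      · exact hstep j (by omega) (Or.inr ⟨h1, by omega⟩)
      · exact lt_trans (hstep k (by omega) (Or.inr ⟨by omega, by omega⟩)) (ih hlt (by omega))
  refine ⟨part1, part2, ?_⟩
  intro j k hnT hjk hcase
  have hjn : 1 ≤ j := by rcases hcase with h | h; exacts [h.1, by omega]
  have hkn : k ≤ n := by rcases hcase with h | h; exacts [by omega, h.2]
  have hsum : pred n p q κs κo κd c (j, k)
      = ∑ u' ∈ T n p q, ker κs κo κd (j, k) u' * astar p q b hh u' := by
    unfold pred
    rw [key]
    rw [← Finset.sum_attach (T n p q) (fun v => ker κs κo κd (j, k) v * astar p q b hh v)]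
    rfl
  rw [hsum, pred_sum hq1 hqp' hpn b hh hb0 hbn (by omega) hkn hnT]
  rw [← hrank j hjn (by omega), ← hrank k (by omega) hkn]
  have : rank n p q κs κo κd c k < rank n p q κs κo κd c j := by
    rcases hcase with h | h
    · exact part1 j k h.1 hjk h.2
    · exact part2 j k h.1 hjk h.2
  linarith

end FINAL

end TIExc
end
end
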